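/- arXiv:2107.09120 — 3 statements merged into one kernel-verified Lean document; each statement's English description precedes it below -/
import Mathlib

section
/- Let α ∈ [0,2] be real. Let Λ be a finite set, q : Λ → ℝ a probability weight (q(λ) ≥ 0, ∑_λ q(λ) = 1), and for each λ ∈ Λ let A(·,λ) : {0,1} → {−1,1} and B(·,λ) : {0,1} → {−1,1} be deterministic response functions. Define correlators E(x,y) := ∑_λ q(λ)·A(x,λ)·B(y,λ) and the marginal ⟨A₀⟩ := ∑_λ q(λ)·A(0,λ). Then α·⟨A₀⟩ + E(0,0) + E(0,1) + E(1,0) − E(1,1) ≤ α + 2. -/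
/-- Every LHV model (convex mixture of deterministic local strategies) satisfies the tilted
Bell inequality `α⟨A₀⟩ + E(0,0) + E(0,1) + E(1,0) − E(1,1) ≤ α + 2`. -/
theorem stmt_7 (α : ℝ) (hα : α ∈ Set.Icc (0 : ℝ) 2)
    (Λ : Type*) [Fintype Λ] (q : Λ → ℝ)
    (hq : ∀ l : Λ, 0 ≤ q l) (hq1 : ∑ l : Λ, q l = 1)
    (A B : Fin 2 → Λ → ℝ)
    (hA : ∀ (x : Fin 2) (l : Λ), A x l = 1 ∨ A x l = -1)
    (hB : ∀ (y : Fin 2) (l : Λ), B y l = 1 ∨ B y l = -1) :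
    α * (∑ l : Λ, q l * A 0 l)
      + (∑ l : Λ, q l * A 0 l * B 0 l)
      + (∑ l : Λ, q l * A 0 l * B 1 l)
      + (∑ l : Λ, q l * A 1 l * B 0 l)
      - (∑ l : Λ, q l * A 1 l * B 1 l) ≤ α + 2 := by
  obtain ⟨hα0, hα2⟩ := hα
  have key : ∀ l : Λ, q l * (α * A 0 l + A 0 l * B 0 l + A 0 l * B 1 l
      + A 1 l * B 0 l - A 1 l * B 1 l) ≤ q l * (α + 2) := by
    intro l
    apply mul_le_mul_of_nonneg_left _ (hq l)
    rcases hA 0 l with h1 | h1 <;> rcases hA 1 l with h2 | h2 <;>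
      rcases hB 0 l with h3 | h3 <;> rcases hB 1 l with h4 | h4 <;>
      rw [h1, h2, h3, h4] <;> nlinarith
  calc α * (∑ l : Λ, q l * A 0 l)
      + (∑ l : Λ, q l * A 0 l * B 0 l)
      + (∑ l : Λ, q l * A 0 l * B 1 l)
      + (∑ l : Λ, q l * A 1 l * B 0 l)
      - (∑ l : Λ, q l * A 1 l * B 1 l)
      = ∑ l : Λ, q l * (α * A 0 l + A 0 l * B 0 l + A 0 l * B 1 l
          + A 1 l * B 0 l - A 1 l * B 1 l) := by
        rw [Finset.mul_sum, ← Finset.sum_add_distrib, ← Finset.sum_add_distrib,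
          ← Finset.sum_add_distrib, ← Finset.sum_sub_distrib]
        apply Finset.sum_congr rfl
        intro l _
        ring
    _ ≤ ∑ l : Λ, q l * (α + 2) := Finset.sum_le_sum fun l _ => key l
    _ = α + 2 := by rw [← Finset.sum_mul, hq1, one_mul]
end

section
/- Let α ∈ [0,2] be real, and set t := √((4 − α²)/(4 + α²)), μ := arctan(t), and θ := (1/2)·arcsin(t). Then α·cos(2θ) + 2·cos(μ) + 2·sin(μ)·sin(2θ) = √(8 + 2α²). In particular, sin(2θ) = t and cos(2θ) = α·√2/√(4 + α²). -/
/-! With `r = √(4 + α²)` one has `t² = (4 - α²)/r²`, so `1 - t² = (α√2/r)²` and `1 + t² = (2√2/r)²`.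
This gives `cos 2θ = α√2/r`, while `2 cos μ + 2 sin μ · t = 2√(1 + t²) = 4√2/r` for `μ = arctan t`.
The value is therefore `√2 (α² + 4)/r = √2 · r = √(8 + 2α²)`. -/

open Real

lemma cos_arcsin_eq_of_sq_add_sq {s c : ℝ} (hc : 0 ≤ c) (h : s ^ 2 + c ^ 2 = 1) :
    cos (arcsin s) = c := by
  rw [cos_arcsin, show 1 - s ^ 2 = c ^ 2 by linarith, sqrt_sq hc]

lemma cos_arctan_add_sin_arctan_mul_self (t : ℝ) :
    cos (arctan t) + sin (arctan t) * t = √(1 + t ^ 2) := by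
  have h : 0 < √(1 + t ^ 2) := by positivity
  rw [cos_arctan, sin_arctan]
  field_simp
  rw [sq_sqrt (by positivity)]

namespace TiltedBell

variable {α t : ℝ}

lemma sq_add_cos_sq_eq_one (ht : t ^ 2 = (4 - α ^ 2) / (4 + α ^ 2)) :
    t ^ 2 + (α * √2 / √(4 + α ^ 2)) ^ 2 = 1 := by
  have h : (0 : ℝ) < 4 + α ^ 2 := by positivity
  rw [ht, div_pow, mul_pow, sq_sqrt zero_le_two, sq_sqrt h.le]
  field_simp
  ring

lemma sqrt_one_add_sq_eq (ht : t ^ 2 = (4 - α ^ 2) / (4 + α ^ 2)) :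
    √(1 + t ^ 2) = 2 * √2 / √(4 + α ^ 2) := by
  have h : (0 : ℝ) < 4 + α ^ 2 := by positivity
  have hsq : 1 + t ^ 2 = (2 * √2 / √(4 + α ^ 2)) ^ 2 := by
    rw [ht, div_pow, mul_pow, sq_sqrt zero_le_two, sq_sqrt h.le]
    field_simp
    ring
  rw [hsq, sqrt_sq (by positivity)]

lemma value_eq_sqrt (α : ℝ) :
    α * (α * √2 / √(4 + α ^ 2)) + 2 * (2 * √2 / √(4 + α ^ 2)) = √(8 + 2 * α ^ 2) := by
  have h : 0 < √(4 + α ^ 2) := by positivity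
  rw [show 8 + 2 * α ^ 2 = 2 * (4 + α ^ 2) by ring, sqrt_mul zero_le_two]
  field_simp
  rw [sq_sqrt (by positivity)]
  ring

end TiltedBell

open TiltedBell

/-- With the optimal state angle `θ` and measurement angle `μ` of the tilted Bell inequality,
the quantum value `α·cos(2θ) + 2cos(μ) + 2sin(μ)sin(2θ)` equals `√(8 + 2α²)`; moreover
`sin(2θ) = t` and `cos(2θ) = α√2/√(4 + α²)`. -/
theorem stmt_8 (α : ℝ) (hα : α ∈ Set.Icc (0 : ℝ) 2)
    (t μ θ : ℝ)
    (ht : t = Real.sqrt ((4 - α ^ 2) / (4 + α ^ 2)))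
    (hμ : μ = Real.arctan t)
    (hθ : θ = (1 / 2) * Real.arcsin t) :
    α * Real.cos (2 * θ) + 2 * Real.cos μ + 2 * Real.sin μ * Real.sin (2 * θ)
        = Real.sqrt (8 + 2 * α ^ 2) ∧
    Real.sin (2 * θ) = t ∧
    Real.cos (2 * θ) = α * Real.sqrt 2 / Real.sqrt (4 + α ^ 2) := by
  obtain ⟨hα0, hα2⟩ := hα
  have ht2 : t ^ 2 = (4 - α ^ 2) / (4 + α ^ 2) := by
    rw [ht, sq_sqrt (div_nonneg (by nlinarith) (by positivity))]
  have hpyth := sq_add_cos_sq_eq_one ht2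
  have h2θ : 2 * θ = arcsin t := by rw [hθ]; ring
  have ht0 : 0 ≤ t := ht ▸ sqrt_nonneg _
  have ht1 : t ≤ 1 := by nlinarith [sq_nonneg (α * √2 / √(4 + α ^ 2))]
  have hsin : sin (2 * θ) = t := by rw [h2θ, sin_arcsin (by linarith) ht1]
  have hcos : cos (2 * θ) = α * √2 / √(4 + α ^ 2) :=
    h2θ ▸ cos_arcsin_eq_of_sq_add_sq (by positivity) hpyth
  refine ⟨?_, hsin, hcos⟩
  calc α * cos (2 * θ) + 2 * cos μ + 2 * sin μ * sin (2 * θ)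
      = α * (α * √2 / √(4 + α ^ 2)) + 2 * (cos (arctan t) + sin (arctan t) * t) := by
        rw [hcos, hsin, hμ]; ring
    _ = √(8 + 2 * α ^ 2) := by
        rw [cos_arctan_add_sin_arctan_mul_self, sqrt_one_add_sq_eq ht2, value_eq_sqrt]
end

section
/- Let α ∈ [0,2] be real, set t := √((4 − α²)/(4 + α²)), μ := arctan(t), θ := (1/2)·arcsin(t). In ℂ² ⊗ ℂ² (equivalently, using 4×4 matrices via Kronecker products), let ψ := cos(θ)·(e₀ ⊗ e₀) + sin(θ)·(e₁ ⊗ e₁), where e₀, e₁ is the standard basis of ℂ², and define the 2×2 Hermitian matrices A₀ := σ_z, A₁ := σ_x, B₀ := cos(μ)·σ_z + sin(μ)·σ_x, B₁ := cos(μ)·σ_z − sin(μ)·σ_x, where σ_z and σ_x are the Pauli matrices. Then ⟨ψ, (α·(A₀ ⊗ I₂) + A₀ ⊗ B₀ + A₀ ⊗ B₁ + A₁ ⊗ B₀ − A₁ ⊗ B₁) ψ⟩ = √(8 + 2α²). -/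
/-!
In the state `cos θ |00⟩ + sin θ |11⟩` one has `⟨σ_z ⊗ 1⟩ = cos 2θ`, `⟨σ_z ⊗ σ_z⟩ = 1` and
`⟨σ_x ⊗ σ_x⟩ = sin 2θ`, so the tilted Bell operator, rewritten as
`σ_z ⊗ (α + 2 cos μ σ_z) + σ_x ⊗ (2 sin μ σ_x)`, has expectation
`α cos 2θ + 2 cos μ + 2 sin μ sin 2θ`.
For `sin 2θ = t = tan μ` this is `α √(1 - t²) + 2 √(1 + t²)`, and the choice of `t` makes
`1 - t² = α² q`, `1 + t² = 4 q`, `8 + 2α² = (4 + α²)² q` with `q = 2 / (4 + α²)`.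
-/

open Matrix Kronecker

lemma star_dotProduct_kronecker_mulVec_schmidt (c s : ℝ) (M N : Matrix (Fin 2) (Fin 2) ℂ) :
    let e : Fin 2 → Fin 2 → ℂ := fun i => Pi.single i 1
    let ψ : Fin 2 × Fin 2 → ℂ := fun p => (c : ℂ) * (e 0 p.1 * e 0 p.2)
        + (s : ℂ) * (e 1 p.1 * e 1 p.2)
    star ψ ⬝ᵥ ((M ⊗ₖ N) *ᵥ ψ)
      = c ^ 2 * (M 0 0 * N 0 0) + c * s * (M 0 1 * N 0 1 + M 1 0 * N 1 0)
        + s ^ 2 * (M 1 1 * N 1 1) := by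
  intro e ψ
  simp only [ψ, e, dotProduct, mulVec, Fintype.sum_prod_type, Fin.sum_univ_two, Pi.star_apply,
    Pi.single_apply, kroneckerMap_apply, star_add, RCLike.star_def, Complex.conj_ofReal, map_zero,
    Fin.isValue, ↓reduceIte, zero_ne_one, one_ne_zero, mul_ite, mul_one, mul_zero, zero_mul,
    add_zero, zero_add]
  ring

lemma tiltedBell_eq_kronecker_add {R m n : Type*} [CommRing R] [DecidableEq n] (α : R)
    (A₀ A₁ : Matrix m m R) (B₀ B₁ : Matrix n n R) :
    α • (A₀ ⊗ₖ (1 : Matrix n n R)) + A₀ ⊗ₖ B₀ + A₀ ⊗ₖ B₁ + A₁ ⊗ₖ B₀ - A₁ ⊗ₖ B₁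
      = A₀ ⊗ₖ (α • 1 + B₀ + B₁) + A₁ ⊗ₖ (B₀ - B₁) := by
  ext ⟨i, k⟩ ⟨j, l⟩
  simp only [Matrix.add_apply, Matrix.sub_apply, Matrix.smul_apply, kronecker_apply, smul_eq_mul]
  ring

noncomputable def tiltedBellValue (α μ θ : ℝ) : ℝ :=
  α * Real.cos (2 * θ) + 2 * Real.cos μ + 2 * Real.sin μ * Real.sin (2 * θ)

lemma tiltedBell_expectation (α μ θ : ℝ) :
    let σz : Matrix (Fin 2) (Fin 2) ℂ := !![1, 0; 0, -1]
    let σx : Matrix (Fin 2) (Fin 2) ℂ := !![0, 1; 1, 0]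
    let B₀ := (Real.cos μ : ℂ) • σz + (Real.sin μ : ℂ) • σx
    let B₁ := (Real.cos μ : ℂ) • σz - (Real.sin μ : ℂ) • σx
    let e : Fin 2 → Fin 2 → ℂ := fun i => Pi.single i 1
    let ψ : Fin 2 × Fin 2 → ℂ := fun p => (Real.cos θ : ℂ) * (e 0 p.1 * e 0 p.2)
        + (Real.sin θ : ℂ) * (e 1 p.1 * e 1 p.2)
    star ψ ⬝ᵥ
      (((α : ℂ) • (σz ⊗ₖ (1 : Matrix (Fin 2) (Fin 2) ℂ))
          + σz ⊗ₖ B₀ + σz ⊗ₖ B₁ + σx ⊗ₖ B₀ - σx ⊗ₖ B₁) *ᵥ ψ)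
      = (tiltedBellValue α μ θ : ℂ) := by
  intro σz σx B₀ B₁ e ψ
  rw [tiltedBell_eq_kronecker_add, add_mulVec, dotProduct_add,
    star_dotProduct_kronecker_mulVec_schmidt, star_dotProduct_kronecker_mulVec_schmidt]
  simp only [σz, σx, B₀, B₁, Matrix.add_apply, Matrix.sub_apply, Matrix.smul_apply, of_apply,
    cons_val', cons_val_zero, cons_val_one, cons_val_fin_one, one_apply_eq,
    one_apply_ne zero_ne_one, one_apply_ne one_ne_zero, smul_eq_mul]
  push_cast [tiltedBellValue, Real.cos_two_mul, Real.sin_two_mul]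
  linear_combination (2 * Complex.cos μ - α) * Complex.sin_sq_add_cos_sq (θ : ℂ)

open Real in
lemma tiltedBellValue_arctan_half_arcsin (α t : ℝ) (ht₀ : -1 ≤ t) (ht₁ : t ≤ 1) :
    tiltedBellValue α (arctan t) (1 / 2 * arcsin t) = α * √(1 - t ^ 2) + 2 * √(1 + t ^ 2) := by
  have hs : √(1 + t ^ 2) ^ 2 = 1 + t ^ 2 := sq_sqrt (by positivity)
  have hpos : 0 < √(1 + t ^ 2) := sqrt_pos.mpr (by positivity)
  rw [tiltedBellValue, show 2 * (1 / 2 * arcsin t) = arcsin t by ring, cos_arcsin,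
    sin_arcsin ht₀ ht₁, cos_arctan, sin_arctan]
  field_simp
  linear_combination -2 * hs

open Real in
lemma mul_sqrt_one_sub_sq_add_two_mul_sqrt_one_add_sq (α t : ℝ) (hα : 0 ≤ α)
    (ht : t ^ 2 = (4 - α ^ 2) / (4 + α ^ 2)) :
    α * √(1 - t ^ 2) + 2 * √(1 + t ^ 2) = √(8 + 2 * α ^ 2) := by
  have hD : 4 + α ^ 2 ≠ 0 := by positivity
  have hsub : 1 - t ^ 2 = α ^ 2 * (2 / (4 + α ^ 2)) := by rw [ht]; field_simp; ring
  have hadd : 1 + t ^ 2 = 2 ^ 2 * (2 / (4 + α ^ 2)) := by rw [ht]; field_simp; ring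
  have hval : 8 + 2 * α ^ 2 = (4 + α ^ 2) ^ 2 * (2 / (4 + α ^ 2)) := by field_simp; ring
  rw [hsub, hadd, hval, sqrt_mul (sq_nonneg _), sqrt_mul (sq_nonneg _), sqrt_mul (sq_nonneg _),
    sqrt_sq hα, sqrt_sq zero_le_two, sqrt_sq (by positivity)]
  ring

/-- The state `|ψ(θ)⟩ = cos θ|00⟩ + sin θ|11⟩` together with measurements
`A₀ = σ_z`, `A₁ = σ_x`, `B₀ = cos μ σ_z + sin μ σ_x`, `B₁ = cos μ σ_z − sin μ σ_x`
attains the maximal quantum value `√(8 + 2α²)` of the tilted Bell operator. -/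
theorem stmt_10 (α : ℝ) (hα : α ∈ Set.Icc (0 : ℝ) 2)
    (t μ θ : ℝ)
    (ht : t = Real.sqrt ((4 - α ^ 2) / (4 + α ^ 2)))
    (hμ : μ = Real.arctan t)
    (hθ : θ = (1 / 2) * Real.arcsin t)
    (σz σx : Matrix (Fin 2) (Fin 2) ℂ)
    (hσz : σz = !![1, 0; 0, -1]) (hσx : σx = !![0, 1; 1, 0])
    (A₀ A₁ B₀ B₁ : Matrix (Fin 2) (Fin 2) ℂ)
    (hA₀ : A₀ = σz) (hA₁ : A₁ = σx)
    (hB₀ : B₀ = (Real.cos μ : ℂ) • σz + (Real.sin μ : ℂ) • σx)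
    (hB₁ : B₁ = (Real.cos μ : ℂ) • σz - (Real.sin μ : ℂ) • σx)
    (e : Fin 2 → Fin 2 → ℂ) (he : e = fun i => Pi.single i 1)
    (ψ : Fin 2 × Fin 2 → ℂ)
    (hψ : ψ = fun p => (Real.cos θ : ℂ) * (e 0 p.1 * e 0 p.2)
        + (Real.sin θ : ℂ) * (e 1 p.1 * e 1 p.2)) :
    star ψ ⬝ᵥ
      (((α : ℂ) • (A₀ ⊗ₖ (1 : Matrix (Fin 2) (Fin 2) ℂ))
          + A₀ ⊗ₖ B₀ + A₀ ⊗ₖ B₁ + A₁ ⊗ₖ B₀ - A₁ ⊗ₖ B₁) *ᵥ ψ)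
      = (Real.sqrt (8 + 2 * α ^ 2) : ℂ) := by
  obtain ⟨hα₀, hα₂⟩ := hα
  have hx : 0 ≤ (4 - α ^ 2) / (4 + α ^ 2) := div_nonneg (by nlinarith) (by positivity)
  have ht₀ : -1 ≤ t := ht ▸ (neg_one_lt_zero.le.trans (Real.sqrt_nonneg _))
  have ht₁ : t ≤ 1 := ht ▸ Real.sqrt_le_one.mpr (div_le_one_of_le₀ (by nlinarith) (by positivity))
  subst hσz hσx hA₀ hA₁ hB₀ hB₁ he hψ
  rw [tiltedBell_expectation, hθ, hμ, tiltedBellValue_arctan_half_arcsin α t ht₀ ht₁,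
    mul_sqrt_one_sub_sq_add_two_mul_sqrt_one_add_sq α t hα₀ (ht ▸ Real.sq_sqrt hx)]
end
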